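/- arXiv:2307.08612 — 2 statements merged into one kernel-verified Lean document; each statement's English description precedes it below -/
import Mathlib

section
/- Let 0 < p < 1, let P_up(n) = p^n (1-p) and P_down(n) = (1-p)^n p for n ∈ ℕ, and let e_p = (2p-1) · log( p/(1-p) ). Then D_KL(P_up ‖ P_down) = e_p / (1-p). (This is Proposition 1 of the paper: for a nearest-neighbour random walk on ℤ that steps right with probability p and left with probability 1-p, whose uptrend and downtrend duration distributions are P_up and P_down, the trend irreversibility index D_KL(P_up ‖ P_down) equals the entropy production rate e_p divided by 1-p.) -/
/-- Proposition 1: for the nearest-neighbour random walk on ℤ stepping right with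
probability `p` and left with probability `1-p`, whose uptrend and downtrend duration
distributions are `P_up(n) = p^n (1-p)` and `P_down(n) = (1-p)^n p`, the trend
irreversibility index `D_KL(P_up ‖ P_down)` equals the entropy production rate
`e_p = (2p-1) log(p/(1-p))` divided by `1-p`. -/
theorem kl_up_down_eq_entropyProduction_div (p : ℝ) (hp : 0 < p) (hp1 : p < 1)
    (P_up : ℕ → ℝ) (hP_up : ∀ n, P_up n = p ^ n * (1 - p))
    (P_down : ℕ → ℝ) (hP_down : ∀ n, P_down n = (1 - p) ^ n * p)
    (e_p : ℝ) (he_p : e_p = (2 * p - 1) * Real.log (p / (1 - p))) :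
    ∑' n : ℕ, P_up n * Real.log (P_up n / P_down n) = e_p / (1 - p) := by
  have hq : 0 < 1 - p := by linarith
  set L := Real.log (p / (1 - p)) with hL
  have hLdef : L = Real.log p - Real.log (1 - p) := Real.log_div hp.ne' hq.ne'
  -- rewrite summand
  have hsummand : ∀ n : ℕ, P_up n * Real.log (P_up n / P_down n)
      = ((1 - p) * L) * ((n : ℝ) * p ^ n) - ((1 - p) * L) * p ^ n := by
    intro n
    rw [hP_up, hP_down]
    have hppow : (0:ℝ) < p ^ n := pow_pos hp n
    have hqpow : (0:ℝ) < (1 - p) ^ n := pow_pos hq n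
    have hlog : Real.log (p ^ n * (1 - p) / ((1 - p) ^ n * p))
        = (n : ℝ) * L - L := by
      rw [Real.log_div (by positivity) (by positivity),
        Real.log_mul hppow.ne' hq.ne', Real.log_mul hqpow.ne' hp.ne',
        Real.log_pow, Real.log_pow, hLdef]
      ring
    rw [hlog]; ring
  have hp' : |p| < 1 := by rw [abs_of_pos hp]; exact hp1
  have h1 : Summable (fun n : ℕ => (n : ℝ) * p ^ n) := by
    simpa using summable_pow_mul_geometric_of_norm_lt_one 1 (by simpa using hp')
  have h2 : Summable (fun n : ℕ => (p : ℝ) ^ n) := summable_geometric_of_lt_one hp.le hp1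
  calc ∑' n : ℕ, P_up n * Real.log (P_up n / P_down n)
      = ∑' n : ℕ, (((1 - p) * L) * ((n : ℝ) * p ^ n) - ((1 - p) * L) * p ^ n) := by
        exact tsum_congr hsummand
    _ = ((1 - p) * L) * (∑' n : ℕ, (n : ℝ) * p ^ n) - ((1 - p) * L) * (∑' n : ℕ, (p:ℝ) ^ n) := by
        rw [Summable.tsum_sub (h1.mul_left _) (h2.mul_left _), tsum_mul_left, tsum_mul_left]
    _ = ((1 - p) * L) * (p / (1 - p) ^ 2) - ((1 - p) * L) * (1 - p)⁻¹ := by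
        rw [tsum_coe_mul_geometric_of_norm_lt_one (by simpa using hp'),
          tsum_geometric_of_lt_one hp.le hp1]
    _ = e_p / (1 - p) := by
        rw [he_p]
        field_simp
        ring
end

section
/- Let X_1, …, X_{L+1} be random variables on a probability space, each taking values in {0, 1}. Then the inefficiency index I_*^{L+1} = log 2 + H(X_1, …, X_L) − H(X_1, …, X_{L+1}) equals zero if and only if X_{L+1} is independent of the vector (X_1, …, X_L) and X_{L+1} is uniformly distributed on {0, 1} (i.e. a fair Bernoulli trial). (This is the efficiency criterion: the market is efficient precisely when I_*^{L+1} = 0.) -/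
open MeasureTheory ProbabilityTheory

/-- Shannon entropy (natural logarithm, with the convention `0 log 0 = 0`) of a random
variable `X` taking values in a finite type `α`, with respect to the measure `μ`. -/
noncomputable def shannonEntropy {Ω α : Type*} [MeasurableSpace Ω] [Fintype α]
    (μ : Measure Ω) (X : Ω → α) : ℝ :=
  -∑ a : α, (μ (X ⁻¹' {a})).toReal * Real.log (μ (X ⁻¹' {a})).toReal

namespace IneffAux

/-- The per-atom contribution to the inefficiency index. -/
noncomputable def gaux (x y : ℝ) : ℝ :=
  x * Real.log x + y * Real.log y - (x + y) * Real.log (x + y) + (x + y) * Real.log 2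

lemma convex_ineq {x y : ℝ} (hx : 0 ≤ x) (hy : 0 ≤ y) (hxy : 0 < x + y) :
    (x + y) * Real.log (x + y) - (x + y) * Real.log 2
      ≤ x * Real.log x + y * Real.log y := by
  have h := Real.convexOn_mul_log.2 (Set.mem_Ici.2 hx) (Set.mem_Ici.2 hy)
    (by norm_num : (0:ℝ) ≤ 1/2) (by norm_num : (0:ℝ) ≤ 1/2) (by norm_num)
  simp only [smul_eq_mul] at h
  have hmid : (1/2 : ℝ) * x + (1/2 : ℝ) * y = (x + y) / 2 := by ring
  rw [hmid] at h
  have hlog : Real.log ((x + y) / 2) = Real.log (x + y) - Real.log 2 :=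
    Real.log_div (ne_of_gt hxy) two_ne_zero
  rw [hlog] at h
  nlinarith [h]

lemma convex_strict_ineq {x y : ℝ} (hx : 0 ≤ x) (hy : 0 ≤ y) (hne : x ≠ y) :
    (x + y) * Real.log (x + y) - (x + y) * Real.log 2
      < x * Real.log x + y * Real.log y := by
  have hxy : 0 < x + y := by
    rcases lt_or_eq_of_le hx with h | h
    · linarith
    · rcases lt_or_eq_of_le hy with h' | h'
      · linarith
      · exact absurd (h.symm.trans h') hne
  have h := Real.strictConvexOn_mul_log.2 (Set.mem_Ici.2 hx) (Set.mem_Ici.2 hy) hne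
    (by norm_num : (0:ℝ) < 1/2) (by norm_num : (0:ℝ) < 1/2) (by norm_num)
  simp only [smul_eq_mul] at h
  have hmid : (1/2 : ℝ) * x + (1/2 : ℝ) * y = (x + y) / 2 := by ring
  rw [hmid] at h
  have hlog : Real.log ((x + y) / 2) = Real.log (x + y) - Real.log 2 :=
    Real.log_div (ne_of_gt hxy) two_ne_zero
  rw [hlog] at h
  nlinarith [h]

lemma gaux_nonneg {x y : ℝ} (hx : 0 ≤ x) (hy : 0 ≤ y) : 0 ≤ gaux x y := by
  unfold gaux
  rcases eq_or_lt_of_le (add_nonneg hx hy) with h | h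
  · have hx0 : x = 0 := by linarith
    have hy0 : y = 0 := by linarith
    simp [hx0, hy0]
  · have := convex_ineq hx hy h
    linarith

lemma gaux_eq_zero_iff {x y : ℝ} (hx : 0 ≤ x) (hy : 0 ≤ y) :
    gaux x y = 0 ↔ x = y := by
  constructor
  · intro h
    by_contra hne
    have := convex_strict_ineq hx hy hne
    unfold gaux at h
    linarith
  · intro h
    subst h
    unfold gaux
    rcases eq_or_lt_of_le hx with h0 | h0
    · simp [← h0]
    · have : Real.log (x + x) = Real.log 2 + Real.log x := by
        rw [show x + x = 2 * x by ring, Real.log_mul two_ne_zero (ne_of_gt h0)]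
      rw [this]
      ring

/-- Summing measures of `f ⁻¹' {b} ∩ t` over a finset. -/
lemma sum_inter {Ω β : Type*} [MeasurableSpace Ω] [MeasurableSpace β]
    [MeasurableSingletonClass β] (μ : Measure Ω) {f : Ω → β} (hf : Measurable f)
    {t : Set Ω} (ht : MeasurableSet t) (s : Finset β) :
    ∑ b ∈ s, μ (f ⁻¹' {b} ∩ t) = μ (f ⁻¹' ↑s ∩ t) := by
  calc ∑ b ∈ s, μ (f ⁻¹' {b} ∩ t) = ∑ b ∈ s, (μ.restrict t) (f ⁻¹' {b}) := by
        refine Finset.sum_congr rfl fun b _ => ?_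
        rw [Measure.restrict_apply' ht]
    _ = (μ.restrict t) (f ⁻¹' ↑s) :=
        MeasureTheory.sum_measure_preimage_singleton s
          (fun b _ => hf (measurableSet_singleton b))
    _ = μ (f ⁻¹' ↑s ∩ t) := Measure.restrict_apply' ht

end IneffAux

open IneffAux

/-- The key general equivalence, for a random vector `Y` into a finite type and a
Boolean random variable `Z`. -/
theorem ineff_key {Ω A : Type*} [MeasurableSpace Ω] [Fintype A] [MeasurableSpace A]
    [MeasurableSingletonClass A]
    (μ : Measure Ω) [IsProbabilityMeasure μ] (Y : Ω → A) (Z : Ω → Bool)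
    (hY : Measurable Y) (hZ : Measurable Z) :
    Real.log 2 + shannonEntropy μ Y -
        (-(∑ a : A,
          ((μ (Y ⁻¹' {a} ∩ Z ⁻¹' {false})).toReal *
              Real.log (μ (Y ⁻¹' {a} ∩ Z ⁻¹' {false})).toReal +
            (μ (Y ⁻¹' {a} ∩ Z ⁻¹' {true})).toReal *
              Real.log (μ (Y ⁻¹' {a} ∩ Z ⁻¹' {true})).toReal))) = 0 ↔
      IndepFun Y Z μ ∧ ∀ b : Bool, μ (Z ⁻¹' {b}) = 1 / 2 := by
  classical
  have hmA : ∀ s : Set A, MeasurableSet s := fun s => s.toFinite.measurableSet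
  have hmB : ∀ t : Set Bool, MeasurableSet t := fun t => t.toFinite.measurableSet
  -- real-valued probabilities
  set p : A → ℝ := fun a => (μ (Y ⁻¹' {a})).toReal with hp
  set rf : A → ℝ := fun a => (μ (Y ⁻¹' {a} ∩ Z ⁻¹' {false})).toReal with hrf
  set rt : A → ℝ := fun a => (μ (Y ⁻¹' {a} ∩ Z ⁻¹' {true})).toReal with hrt
  have hrfnn : ∀ a, 0 ≤ rf a := fun a => ENNReal.toReal_nonneg
  have hrtnn : ∀ a, 0 ≤ rt a := fun a => ENNReal.toReal_nonneg
  -- splitting identity in ℝ≥0∞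
  have hZt : Z ⁻¹' {true} = (Z ⁻¹' {false})ᶜ := by
    ext ω; simp [Set.mem_preimage]
  have hsplitE : ∀ a, μ (Y ⁻¹' {a} ∩ Z ⁻¹' {false}) + μ (Y ⁻¹' {a} ∩ Z ⁻¹' {true})
      = μ (Y ⁻¹' {a}) := by
    intro a
    have hd : Y ⁻¹' {a} \ Z ⁻¹' {false} = Y ⁻¹' {a} ∩ Z ⁻¹' {true} := by
      rw [hZt, Set.diff_eq]
    have := measure_inter_add_diff (μ := μ) (Y ⁻¹' {a}) (hZ (hmB {false}))
    rw [hd] at this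
    exact this
  have hpr : ∀ a, p a = rf a + rt a := by
    intro a
    rw [hp, hrf, hrt, ← ENNReal.toReal_add (measure_ne_top μ _) (measure_ne_top μ _),
      hsplitE a]
  -- total probability
  have htotE : ∑ a : A, μ (Y ⁻¹' {a}) = 1 := by
    have := MeasureTheory.sum_measure_preimage_singleton (μ := μ) (Finset.univ : Finset A)
      (fun a _ => hY (measurableSet_singleton a))
    simpa using this
  have hsum1 : ∑ a : A, p a = 1 := by
    have := ENNReal.toReal_sum (s := (Finset.univ : Finset A))
      (f := fun a => μ (Y ⁻¹' {a})) (fun a _ => measure_ne_top μ _)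
    rw [htotE] at this
    simpa [hp] using this.symm
  -- rewrite LHS as a sum of per-atom terms
  have hI : Real.log 2 + shannonEntropy μ Y -
      (-(∑ a : A, (rf a * Real.log (rf a) + rt a * Real.log (rt a))))
      = ∑ a : A, gaux (rf a) (rt a) := by
    have hlog2 : Real.log 2 = ∑ a : A, (rf a + rt a) * Real.log 2 := by
      rw [← Finset.sum_mul]
      have : ∑ a : A, (rf a + rt a) = 1 := by
        rw [← hsum1]; exact Finset.sum_congr rfl fun a _ => (hpr a).symm
      rw [this, one_mul]
    have hHY : shannonEntropy μ Y
        = -∑ a : A, (rf a + rt a) * Real.log (rf a + rt a) := by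
      unfold shannonEntropy
      congr 1
      exact Finset.sum_congr rfl fun a _ => by rw [← hpr a]
    rw [hHY, hlog2]
    simp only [gaux, Finset.sum_add_distrib, Finset.sum_sub_distrib]
    ring
  rw [hI, Finset.sum_eq_zero_iff_of_nonneg
    (fun a _ => gaux_nonneg (hrfnn a) (hrtnn a))]
  -- reduce to: all atoms balanced
  have hiff : (∀ a ∈ Finset.univ, gaux (rf a) (rt a) = 0) ↔ ∀ a : A, rf a = rt a := by
    constructor
    · intro h a
      exact (gaux_eq_zero_iff (hrfnn a) (hrtnn a)).1 (h a (Finset.mem_univ a))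
    · intro h a _
      exact (gaux_eq_zero_iff (hrfnn a) (hrtnn a)).2 (h a)
  rw [hiff]
  constructor
  · intro h
    -- ENNReal version of balance
    have hEq : ∀ a, μ (Y ⁻¹' {a} ∩ Z ⁻¹' {false}) = μ (Y ⁻¹' {a} ∩ Z ⁻¹' {true}) := by
      intro a
      exact (ENNReal.toReal_eq_toReal_iff' (measure_ne_top μ _) (measure_ne_top μ _)).1 (h a)
    have hm : ∀ a (b : Bool), μ (Y ⁻¹' {a} ∩ Z ⁻¹' {b}) = μ (Y ⁻¹' {a}) / 2 := by
      intro a b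
      have h2 : 2 * μ (Y ⁻¹' {a} ∩ Z ⁻¹' {false}) = μ (Y ⁻¹' {a}) := by
        rw [two_mul]
        nth_rewrite 2 [hEq a]
        exact hsplitE a
      have hf : μ (Y ⁻¹' {a} ∩ Z ⁻¹' {false}) = μ (Y ⁻¹' {a}) / 2 :=
        (ENNReal.eq_div_iff (by norm_num) (by norm_num)).2 h2
      cases b
      · exact hf
      · rw [← hEq a]; exact hf
    have hq : ∀ b : Bool, μ (Z ⁻¹' {b}) = 1 / 2 := by
      intro b
      have hdec : μ (Z ⁻¹' {b}) = ∑ a : A, μ (Y ⁻¹' {a} ∩ Z ⁻¹' {b}) := by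
        rw [sum_inter μ hY (hZ (hmB {b})) Finset.univ]
        simp
      rw [hdec]
      calc ∑ a : A, μ (Y ⁻¹' {a} ∩ Z ⁻¹' {b}) = ∑ a : A, μ (Y ⁻¹' {a}) / 2 :=
            Finset.sum_congr rfl fun a _ => hm a b
        _ = (∑ a : A, μ (Y ⁻¹' {a})) / 2 := by
            simp only [div_eq_mul_inv, Finset.sum_mul]
        _ = 1 / 2 := by rw [htotE]
    refine ⟨?_, hq⟩
    rw [indepFun_iff_measure_inter_preimage_eq_mul]
    intro s t _ _
    have hmprod : ∀ a (b : Bool),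
        μ (Y ⁻¹' {a} ∩ Z ⁻¹' {b}) = μ (Y ⁻¹' {a}) * μ (Z ⁻¹' {b}) := by
      intro a b
      rw [hm a b, hq b]
      rw [ENNReal.div_eq_inv_mul, mul_comm]
      congr 1
      rw [one_div]
    calc μ (Y ⁻¹' s ∩ Z ⁻¹' t)
        = ∑ a ∈ s.toFinset, μ (Y ⁻¹' {a} ∩ Z ⁻¹' t) := by
          rw [sum_inter μ hY (hZ (hmB t)) s.toFinset, Set.coe_toFinset]
      _ = ∑ a ∈ s.toFinset, ∑ b ∈ t.toFinset, μ (Y ⁻¹' {a} ∩ Z ⁻¹' {b}) := by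
          refine Finset.sum_congr rfl fun a _ => ?_
          have : ∑ b ∈ t.toFinset, μ (Z ⁻¹' {b} ∩ Y ⁻¹' {a}) = μ (Z ⁻¹' t ∩ Y ⁻¹' {a}) := by
            rw [sum_inter μ hZ (hY (measurableSet_singleton a)) t.toFinset,
              Set.coe_toFinset]
          rw [Set.inter_comm, ← this]
          exact Finset.sum_congr rfl fun b _ => by rw [Set.inter_comm]
      _ = ∑ a ∈ s.toFinset, ∑ b ∈ t.toFinset, μ (Y ⁻¹' {a}) * μ (Z ⁻¹' {b}) := by
          exact Finset.sum_congr rfl fun a _ =>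
            Finset.sum_congr rfl fun b _ => hmprod a b
      _ = (∑ a ∈ s.toFinset, μ (Y ⁻¹' {a})) * (∑ b ∈ t.toFinset, μ (Z ⁻¹' {b})) := by
          rw [Finset.sum_mul_sum]
      _ = μ (Y ⁻¹' s) * μ (Z ⁻¹' t) := by
          rw [MeasureTheory.sum_measure_preimage_singleton s.toFinset
              (fun a _ => hY (measurableSet_singleton a)),
            MeasureTheory.sum_measure_preimage_singleton t.toFinset
              (fun b _ => hZ (measurableSet_singleton b)),
            Set.coe_toFinset, Set.coe_toFinset]
  · rintro ⟨hind, hq⟩ a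
    have := (indepFun_iff_measure_inter_preimage_eq_mul.1 hind) {a} {false}
      (measurableSet_singleton a) (hmB {false})
    have ht := (indepFun_iff_measure_inter_preimage_eq_mul.1 hind) {a} {true}
      (measurableSet_singleton a) (hmB {true})
    show (μ (Y ⁻¹' {a} ∩ Z ⁻¹' {false})).toReal = (μ (Y ⁻¹' {a} ∩ Z ⁻¹' {true})).toReal
    rw [this, ht, hq false, hq true]

/-- Joint entropy of the full vector, expressed atom-by-atom in terms of the
initial segment `Y` and the last coordinate `Z`. -/
theorem joint_entropy_eq {Ω : Type*} [MeasurableSpace Ω] (μ : Measure Ω)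
    (L : ℕ) (X : Fin (L + 1) → Ω → Bool) :
    shannonEntropy μ (fun ω => fun i : Fin (L + 1) => X i ω)
      = -(∑ a : Fin L → Bool,
          ((μ ((fun ω => fun i : Fin L => X i.castSucc ω) ⁻¹' {a} ∩
              X (Fin.last L) ⁻¹' {false})).toReal *
            Real.log (μ ((fun ω => fun i : Fin L => X i.castSucc ω) ⁻¹' {a} ∩
              X (Fin.last L) ⁻¹' {false})).toReal +
           (μ ((fun ω => fun i : Fin L => X i.castSucc ω) ⁻¹' {a} ∩
              X (Fin.last L) ⁻¹' {true})).toReal *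
            Real.log (μ ((fun ω => fun i : Fin L => X i.castSucc ω) ⁻¹' {a} ∩
              X (Fin.last L) ⁻¹' {true})).toReal)) := by
  classical
  set Y : Ω → (Fin L → Bool) := fun ω => fun i : Fin L => X i.castSucc ω with hYdef
  set W : Ω → (Fin (L + 1) → Bool) := fun ω => fun i : Fin (L + 1) => X i ω with hWdef
  set Z : Ω → Bool := X (Fin.last L) with hZdef
  have hsnoc : ∀ (a : Fin L → Bool) (b : Bool),
      W ⁻¹' {Fin.snoc a b} = Y ⁻¹' {a} ∩ Z ⁻¹' {b} := by
    intro a b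
    ext ω
    simp only [Set.mem_preimage, Set.mem_singleton_iff, Set.mem_inter_iff]
    constructor
    · intro h
      constructor
      · funext i
        have := congrFun h i.castSucc
        simpa [hWdef, hYdef, Fin.snoc_castSucc] using this
      · have := congrFun h (Fin.last L)
        simpa [hWdef, hZdef, Fin.snoc_last] using this
    · rintro ⟨h1, h2⟩
      funext i
      refine Fin.lastCases ?_ ?_ i
      · simpa [hWdef, hZdef, Fin.snoc_last] using h2
      · intro j
        have := congrFun h1 j
        simpa [hWdef, hYdef, Fin.snoc_castSucc] using this
  unfold shannonEntropy
  congr 1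
  have key : ∑ x : Bool × (Fin L → Bool),
      (μ (W ⁻¹' {Fin.snoc x.2 x.1})).toReal *
        Real.log (μ (W ⁻¹' {Fin.snoc x.2 x.1})).toReal
      = ∑ c : Fin (L + 1) → Bool,
        (μ (W ⁻¹' {c})).toReal * Real.log (μ (W ⁻¹' {c})).toReal := by
    refine Fintype.sum_equiv (Fin.snocEquiv (fun _ => Bool)) _ _ fun x => ?_
    rfl
  rw [← key, Fintype.sum_prod_type, Fintype.sum_bool, Finset.sum_add_distrib]
  rw [add_comm]
  congr 1
  · exact Finset.sum_congr rfl fun a _ => by rw [hsnoc]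
  · exact Finset.sum_congr rfl fun a _ => by rw [hsnoc]

/-- Efficiency criterion: the inefficiency index of Brouty and Garcin,
`I_*^{L+1} = log 2 + H(X_1, …, X_L) − H(X_1, …, X_{L+1})`, vanishes if and only if
`X_{L+1}` is independent of `(X_1, …, X_L)` and is a fair Bernoulli trial
(uniformly distributed on `{0,1}`). -/
theorem inefficiency_index_eq_zero_iff
    {Ω : Type*} [MeasurableSpace Ω] (μ : Measure Ω) [IsProbabilityMeasure μ]
    (L : ℕ) (X : Fin (L + 1) → Ω → Bool) (hmeasX : ∀ i, Measurable (X i)) :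
    Real.log 2 + shannonEntropy μ (fun ω => fun i : Fin L => X i.castSucc ω) -
        shannonEntropy μ (fun ω => fun i : Fin (L + 1) => X i ω) = 0 ↔
      IndepFun (fun ω => fun i : Fin L => X i.castSucc ω) (X (Fin.last L)) μ ∧
        ∀ b : Bool, μ (X (Fin.last L) ⁻¹' {b}) = 1 / 2 := by
  have hY : Measurable (fun ω => fun i : Fin L => X i.castSucc ω) :=
    measurable_pi_lambda _ fun i => hmeasX _
  have hZ : Measurable (X (Fin.last L)) := hmeasX _
  rw [joint_entropy_eq μ L X]
  exact ineff_key μ _ _ hY hZ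
end
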